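/- arXiv:1609.02119 — 8 statements merged into one kernel-verified Lean document; each statement's English description precedes it below -/
import Mathlib

section
/- Let R be a commutative ring and let a, b, c, X, Y, Z ∈ R. Set F₁ = XY, F₂ = XY + aZ², F₃ = bYZ + cZ², and define G(x, y, z) = (ab²·x·(y − x), (cx − cy + az)², b·(cx − cy + az)·(y − x)). Then G(F₁, F₂, F₃) = (a²b²YZ²·X, a²b²YZ²·Y, a²b²YZ²·Z). (This identity shows that the rational map f_{a,b,c} of P² is birational, with inverse induced by G.) -/
/-- For a commutative ring `R` and `a b c X Y Z : R`, with
`F₁ = XY`, `F₂ = XY + aZ²`, `F₃ = bYZ + cZ²` and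
`G (x, y, z) = (ab²·x·(y − x), (cx − cy + az)², b·(cx − cy + az)·(y − x))`,
we have `G (F₁, F₂, F₃) = (a²b²YZ²·X, a²b²YZ²·Y, a²b²YZ²·Z)`. -/
theorem statement0 (R : Type*) [CommRing R] (a b c X Y Z : R)
    (F₁ F₂ F₃ : R) (hF₁ : F₁ = X * Y) (hF₂ : F₂ = X * Y + a * Z ^ 2)
    (hF₃ : F₃ = b * Y * Z + c * Z ^ 2)
    (G : R × R × R → R × R × R)
    (hG : ∀ x y z : R, G (x, y, z) =
      (a * b ^ 2 * x * (y - x), (c * x - c * y + a * z) ^ 2,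
        b * (c * x - c * y + a * z) * (y - x))) :
    G (F₁, F₂, F₃) =
      (a ^ 2 * b ^ 2 * Y * Z ^ 2 * X, a ^ 2 * b ^ 2 * Y * Z ^ 2 * Y,
        a ^ 2 * b ^ 2 * Y * Z ^ 2 * Z) := by
  subst hF₁ hF₂ hF₃; rw [hG]; refine Prod.ext ?_ (Prod.ext ?_ ?_) <;> ring
end

section
/- Let K be a field, let a, b, c ∈ K with abc ≠ 0, and let α, β, γ ∈ K satisfy α ≠ 0, α ≠ β, and αc − βc + γa = 0. Then there is no nonzero triple (X, Y, Z) ∈ K³ and no nonzero t ∈ K with (XY, XY + aZ², bYZ + cZ²) = (tα, tβ, tγ). (Equivalently, the points [a, at, ct − c] of P² have empty inverse image under f_{a,b,c}.) -/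
/-- Let `K` be a field, `a b c : K` with `abc ≠ 0`, and let
`α β γ : K` satisfy `α ≠ 0`, `α ≠ β`, and `αc − βc + γa = 0`. Then there is no
nonzero triple `(X, Y, Z)` and no nonzero `t` with
`(XY, XY + aZ², bYZ + cZ²) = t·(α, β, γ)`.
(The points `[a, at, ct − c]` have empty inverse image under `f_{a,b,c}`.) -/
theorem statement2 (K : Type*) [Field K] (a b c α β γ : K)
    (habc : a * b * c ≠ 0) (hα : α ≠ 0) (hαβ : α ≠ β)
    (h : α * c - β * c + γ * a = 0) :
    ¬ ∃ (X Y Z t : K), (X, Y, Z) ≠ (0, 0, 0) ∧ t ≠ 0 ∧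
      X * Y = t * α ∧ X * Y + a * Z ^ 2 = t * β ∧
      b * Y * Z + c * Z ^ 2 = t * γ := by
  rintro ⟨X, Y, Z, t, hne, ht, h1, h2, h3⟩
  have ha : a ≠ 0 := fun h0 => habc (by simp [h0])
  have hb : b ≠ 0 := fun h0 => habc (by simp [h0])
  have haZ : a * Z ^ 2 = t * (β - α) := by linear_combination h2 - h1
  have hZ : Z ≠ 0 := by
    intro h0
    apply hαβ
    have : t * (β - α) = 0 := by rw [← haZ, h0]; ring
    rcases mul_eq_zero.mp this with h' | h'
    · exact absurd h' ht
    · exact (sub_eq_zero.mp h').symm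
  have hY : Y ≠ 0 := by
    intro h0
    exact mul_ne_zero ht hα (by rw [← h1, h0, mul_zero])
  have key : a * b * Y * Z = 0 := by linear_combination a * h3 - c * haZ + t * h
  exact mul_ne_zero (mul_ne_zero (mul_ne_zero ha hb) hY) hZ key
end

section
/- Let K be a field, let a, b, c ∈ K with abc ≠ 0, and let α, β, γ ∈ K satisfy α ≠ 0, α ≠ β, and δ := αc − βc + γa ≠ 0. Set P = (−α(α − β)ab², δ², −(α − β)δb). Then: (i) applying (X,Y,Z) ↦ (XY, XY + aZ², bYZ + cZ²) to P yields s·(α, β, γ) with s = −ab²δ²(α − β) ≠ 0; and (ii) every nonzero triple (X, Y, Z) ∈ K³ for which (XY, XY + aZ², bYZ + cZ²) = t·(α, β, γ) for some nonzero t ∈ K is a nonzero scalar multiple of P. (Thus f_{a,b,c}⁻¹([α, β, γ]) consists of exactly one point.) -/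
/-- Let `K` be a field, `a b c : K` with `abc ≠ 0`, and let
`α β γ : K` satisfy `α ≠ 0`, `α ≠ β`, `δ := αc − βc + γa ≠ 0`.  With
`P = (−α(α − β)ab², δ², −(α − β)δb)`:
(i) applying `(X,Y,Z) ↦ (XY, XY + aZ², bYZ + cZ²)` to `P` gives `s·(α,β,γ)` with
`s = −ab²δ²(α − β) ≠ 0`; and (ii) every nonzero triple mapping to a nonzero
multiple of `(α,β,γ)` is a nonzero scalar multiple of `P`.
(Thus `f_{a,b,c}⁻¹([α,β,γ])` is a single point.) -/
theorem statement3 (K : Type*) [Field K] (a b c α β γ : K)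
    (habc : a * b * c ≠ 0) (hα : α ≠ 0) (hαβ : α ≠ β)
    (δ : K) (hδdef : δ = α * c - β * c + γ * a) (hδ : δ ≠ 0)
    (P₁ P₂ P₃ s : K)
    (hP₁ : P₁ = -α * (α - β) * a * b ^ 2) (hP₂ : P₂ = δ ^ 2)
    (hP₃ : P₃ = -(α - β) * δ * b) (hs : s = -(a * b ^ 2 * δ ^ 2 * (α - β))) :
    (s ≠ 0 ∧
      P₁ * P₂ = s * α ∧
      P₁ * P₂ + a * P₃ ^ 2 = s * β ∧
      b * P₂ * P₃ + c * P₃ ^ 2 = s * γ) ∧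
    (∀ X Y Z t : K, (X, Y, Z) ≠ (0, 0, 0) → t ≠ 0 →
      X * Y = t * α → X * Y + a * Z ^ 2 = t * β → b * Y * Z + c * Z ^ 2 = t * γ →
      ∃ u : K, u ≠ 0 ∧ X = u * P₁ ∧ Y = u * P₂ ∧ Z = u * P₃) := by
  have ha : a ≠ 0 := fun h => habc (by simp [h])
  have hb : b ≠ 0 := fun h => habc (by simp [h])
  have hab : α - β ≠ 0 := sub_ne_zero.mpr hαβ
  subst hP₁ hP₂ hP₃ hs
  constructor
  · refine ⟨?_, by ring, by ring, by linear_combination (-(α-β)*δ^2*b^2) * hδdef⟩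
    exact neg_ne_zero.mpr (mul_ne_zero (mul_ne_zero (mul_ne_zero ha
      (pow_ne_zero 2 hb)) (pow_ne_zero 2 hδ)) hab)
  · intro X Y Z t hne ht h1 h2 h3
    have hZ2 : a * Z ^ 2 = t * (β - α) := by linear_combination h2 - h1
    have hZ : Z ≠ 0 := by
      intro h
      have h0 : t * (β - α) = 0 := by rw [← hZ2, h]; ring
      rcases mul_eq_zero.mp h0 with h' | h'
      · exact ht h'
      · exact hab (by linear_combination -h')
    have hY2 : a * b * Y * Z = t * δ := by
      linear_combination a * h3 - c * hZ2 - t * hδdef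
    have key : a * Z * (b * (α - β) * Y + Z * δ) = 0 := by
      linear_combination (α - β) * hY2 + δ * hZ2
    have key2 : b * (α - β) * Y + Z * δ = 0 := by
      rcases mul_eq_zero.mp key with h | h
      · exact absurd h (mul_ne_zero ha hZ)
      · exact h
    have hX : X * δ = α * a * b * Z := by
      have h5 : t * (X * δ - α * a * b * Z) = 0 := by
        linear_combination a * b * Z * h1 - X * hY2
      linear_combination (mul_eq_zero.mp h5).resolve_left ht
    have hden : -(α - β) * δ * b ≠ 0 :=
      mul_ne_zero (mul_ne_zero (neg_ne_zero.mpr hab) hδ) hb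
    refine ⟨Z / (-(α - β) * δ * b), div_ne_zero hZ hden, ?_, ?_, ?_⟩
    · rw [div_mul_eq_mul_div, eq_div_iff hden]
      linear_combination (-(α - β) * b) * hX
    · rw [div_mul_eq_mul_div, eq_div_iff hden]
      linear_combination (-δ) * key2
    · rw [div_mul_eq_mul_div, eq_div_iff hden]
end

section
/- Let K be a field, let a, b, c ∈ K with abc ≠ 0, and let β, γ ∈ K satisfy β ≠ 0 and aγ − cβ ≠ 0. Then: (i) applying (X,Y,Z) ↦ (XY, XY + aZ², bYZ + cZ²) to (0, aγ − cβ, bβ) yields ab²β·(0, β, γ), a nonzero multiple of (0, β, γ); and (ii) every nonzero triple (X, Y, Z) ∈ K³ for which (XY, XY + aZ², bYZ + cZ²) = t·(0, β, γ) for some nonzero t ∈ K is a nonzero scalar multiple of (0, aγ − cβ, bβ). (Thus f_{a,b,c}⁻¹([0, β, γ]) consists of the single point [0, aγ − cβ, bβ].) -/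
/-- Let `K` be a field, `a b c : K` with `abc ≠ 0`, and `β γ : K`
with `β ≠ 0` and `aγ − cβ ≠ 0`.  Then:
(i) applying `(X,Y,Z) ↦ (XY, XY + aZ², bYZ + cZ²)` to `(0, aγ − cβ, bβ)` yields
`ab²β·(0, β, γ)`, a nonzero multiple of `(0, β, γ)`; and
(ii) every nonzero triple mapping to a nonzero multiple of `(0, β, γ)` is a
nonzero scalar multiple of `(0, aγ − cβ, bβ)`.
(Thus `f_{a,b,c}⁻¹([0,β,γ])` is the single point `[0, aγ − cβ, bβ]`.) -/
theorem statement4 (K : Type*) [Field K] (a b c β γ : K)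
    (habc : a * b * c ≠ 0) (hβ : β ≠ 0) (h : a * γ - c * β ≠ 0) :
    (a * b ^ 2 * β ≠ 0 ∧
      (0 : K) * (a * γ - c * β) = a * b ^ 2 * β * 0 ∧
      (0 : K) * (a * γ - c * β) + a * (b * β) ^ 2 = a * b ^ 2 * β * β ∧
      b * (a * γ - c * β) * (b * β) + c * (b * β) ^ 2 = a * b ^ 2 * β * γ) ∧
    (∀ X Y Z t : K, (X, Y, Z) ≠ (0, 0, 0) → t ≠ 0 →
      X * Y = t * 0 → X * Y + a * Z ^ 2 = t * β → b * Y * Z + c * Z ^ 2 = t * γ →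
      ∃ u : K, u ≠ 0 ∧ X = u * 0 ∧ Y = u * (a * γ - c * β) ∧ Z = u * (b * β)) := by
  have ha : a ≠ 0 := fun ha => habc (by simp [ha])
  have hb : b ≠ 0 := fun hb => habc (by simp [hb])
  have hc : c ≠ 0 := fun hc => habc (by simp [hc])
  constructor
  · exact ⟨mul_ne_zero (mul_ne_zero ha (pow_ne_zero 2 hb)) hβ, by ring, by ring, by ring⟩
  · intro X Y Z t _ ht h0 h1 h2
    rw [mul_zero] at h0
    rw [h0, zero_add] at h1
    have hZ : Z ≠ 0 := by
      intro hZ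
      rw [hZ] at h1
      simp at h1
      rcases h1 with h' | h' <;> [exact ht h'; exact hβ h']
    have hY : Y ≠ 0 := by
      intro hY
      rw [hY, mul_zero, zero_mul, zero_add] at h2
      apply h
      have : a * (c * Z ^ 2) = c * (a * Z ^ 2) := by ring
      rw [h2, h1] at this
      have : t * (a * γ - c * β) = 0 := by rw [mul_sub]; linear_combination this
      rcases mul_eq_zero.mp this with h' | h'
      · exact absurd h' ht
      · exact h'
    have hX : X = 0 := by
      rcases mul_eq_zero.mp h0 with h' | h'
      · exact h'
      · exact absurd h' hY
    refine ⟨Z / (b * β), div_ne_zero hZ (mul_ne_zero hb hβ), by simp [hX], ?_, by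
      field_simp⟩
    -- show Y = Z/(bβ) * (aγ - cβ)
    -- from t ≠ 0: β*(bYZ + cZ²) = β t γ and γ * aZ² = γ t β
    have key : (a * γ - c * β) * Z = b * β * Y := by
      have e : β * (b * Y * Z + c * Z ^ 2) = γ * (a * Z ^ 2) := by
        rw [h2, h1]; ring
      have : Z * ((a * γ - c * β) * Z - b * β * Y) = 0 := by linear_combination -e
      rcases mul_eq_zero.mp this with h' | h'
      · exact absurd h' hZ
      · linear_combination h'
    field_simp
    linear_combination -key
end

section
/- Let a, b, c ∈ ℂ with abc ≠ 0, and define sequences (Uₙ) and (Vₙ) in ℂ by (U₀, V₀) = (0, 1) and (U_{n+1}, V_{n+1}) = (aVₙ, bUₙ + cVₙ). Then there exists n ≥ 1 with Vₙ = 0 if and only if there exists a root of unity ζ ∈ ℂ with ζ ≠ 1 such that ζc² + (ζ + 1)²ab = 0. (This equivalence is the key criterion in the proof that f_{a,b,c} is algebraically stable if and only if (a,b,c) is not an exceptional triple.) -/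
/-!
Let `α, β` be the roots of `X² - cX - ab`, so that `Vₙ₊₂ = c Vₙ₊₁ + ab Vₙ` has characteristic
roots `α, β` and `(α - β) Vₙ = αⁿ⁺¹ - βⁿ⁺¹`; when `α = β` instead `Vₙ = (n + 1) αⁿ ≠ 0`. Hence some
`Vₙ` with `n ≥ 1` vanishes iff `α ≠ β` and `α/β` is a root of unity. Finally
`ζc² + (ζ + 1)²ab = (ζα - β)(α - ζβ)`, so the roots of unity `ζ ≠ 1` in the criterion are exactly
`α/β` and `β/α`.
-/

open Polynomial

theorem exists_add_eq_and_mul_eq {K : Type*} [Field K] [IsAlgClosed K] (p q : K) :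
    ∃ α β : K, α + β = p ∧ α * β = q := by
  have hdeg : (X ^ 2 - C p * X + C q).degree = 2 := by compute_degree!
  obtain ⟨α, hα⟩ := IsAlgClosed.exists_root _ (by rw [hdeg]; decide)
  obtain ⟨β, -, hsum, hprod⟩ := vieta_formula_quadratic (b := p) (c := q) (x := α)
    (by simpa [sq] using hα)
  exact ⟨α, β, hsum, hprod⟩

section SecondOrderRecurrence

variable {K : Type*} [Field K] {α β : K} {V : ℕ → K}

theorem sub_mul_eq_pow_sub_pow_of_recurrence (h0 : V 0 = 1) (h1 : V 1 = α + β)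
    (hrec : ∀ n, V (n + 2) = (α + β) * V (n + 1) - α * β * V n) (n : ℕ) :
    (α - β) * V n = α ^ (n + 1) - β ^ (n + 1) := by
  induction n using Nat.twoStepInduction with
  | zero => rw [h0]; ring
  | one => rw [h1]; ring
  | more n ih ih' => rw [hrec]; linear_combination (α + β) * ih' - α * β * ih

theorem eq_succ_mul_pow_of_recurrence (h0 : V 0 = 1) (h1 : V 1 = α + α)
    (hrec : ∀ n, V (n + 2) = (α + α) * V (n + 1) - α * α * V n) (n : ℕ) :
    V n = (n + 1) * α ^ n := by
  induction n using Nat.twoStepInduction with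
  | zero => rw [h0]; ring
  | one => rw [h1]; ring
  | more n ih ih' => rw [hrec, ih, ih']; push_cast; ring

theorem eq_zero_iff_of_recurrence [CharZero K] (hα : α ≠ 0) (h0 : V 0 = 1) (h1 : V 1 = α + β)
    (hrec : ∀ n, V (n + 2) = (α + β) * V (n + 1) - α * β * V n) (n : ℕ) :
    V n = 0 ↔ α ≠ β ∧ α ^ (n + 1) = β ^ (n + 1) := by
  by_cases hαβ : α = β
  · subst hαβ
    simp [eq_succ_mul_pow_of_recurrence h0 h1 hrec n, hα, Nat.cast_add_one_ne_zero]
  · rw [← mul_right_inj' (sub_ne_zero.2 hαβ), mul_zero,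
      sub_mul_eq_pow_sub_pow_of_recurrence h0 h1 hrec, sub_eq_zero]
    simp [hαβ]

end SecondOrderRecurrence

theorem ne_and_pow_eq_pow_of_eq_mul {K : Type*} [Field K] {α β ζ : K} {m : ℕ}
    (hζm : ζ ^ m = 1) (hζ1 : ζ ≠ 1) (hα : α ≠ 0) (h : β = ζ * α) :
    α ≠ β ∧ α ^ m = β ^ m := by
  subst h
  exact ⟨fun h ↦ hζ1 ((mul_eq_right₀ hα).1 h.symm), by rw [mul_pow, hζm, one_mul]⟩

/-- Let `a b c : ℂ` with `abc ≠ 0`, and define `(Uₙ), (Vₙ)` by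
`(U₀, V₀) = (0, 1)` and `(U_{n+1}, V_{n+1}) = (aVₙ, bUₙ + cVₙ)`.  Then there is an
`n ≥ 1` with `Vₙ = 0` iff there is a root of unity `ζ ∈ ℂ`, `ζ ≠ 1`, with
`ζc² + (ζ + 1)²ab = 0`. -/
theorem statement5 (a b c : ℂ) (habc : a * b * c ≠ 0) (U V : ℕ → ℂ)
    (hU0 : U 0 = 0) (hV0 : V 0 = 1)
    (hU : ∀ n : ℕ, U (n + 1) = a * V n)
    (hV : ∀ n : ℕ, V (n + 1) = b * U n + c * V n) :
    (∃ n : ℕ, 1 ≤ n ∧ V n = 0) ↔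
      ∃ ζ : ℂ, (∃ m : ℕ, 1 ≤ m ∧ ζ ^ m = 1) ∧ ζ ≠ 1 ∧
        ζ * c ^ 2 + (ζ + 1) ^ 2 * a * b = 0 := by
  obtain ⟨α, β, hsum, hprod⟩ := exists_add_eq_and_mul_eq c (-(a * b))
  have hαβ : α * β ≠ 0 := hprod ▸ neg_ne_zero.2 (left_ne_zero_of_mul habc)
  have hα : α ≠ 0 := left_ne_zero_of_mul hαβ
  have hβ : β ≠ 0 := right_ne_zero_of_mul hαβ
  have hV1 : V 1 = α + β := by rw [hV, hU0, hV0, hsum]; ring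
  have hrec (n : ℕ) : V (n + 2) = (α + β) * V (n + 1) - α * β * V n := by
    rw [hV, hU, hsum, hprod]; ring
  have hzero := eq_zero_iff_of_recurrence hα hV0 hV1 hrec
  have hfactor (ζ : ℂ) : ζ * c ^ 2 + (ζ + 1) ^ 2 * a * b = (ζ * α - β) * (α - ζ * β) := by
    rw [← hsum]; linear_combination (ζ + 1) ^ 2 * hprod
  simp_rw [hfactor, mul_eq_zero, sub_eq_zero]
  constructor
  · rintro ⟨n, -, hn⟩
    obtain ⟨hne, hpow⟩ := (hzero n).1 hn
    refine ⟨α / β, ⟨n + 1, by omega, by rw [div_pow, hpow, div_self (pow_ne_zero _ hβ)]⟩, ?_,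
      Or.inr (div_mul_cancel₀ α hβ).symm⟩
    rwa [Ne, div_eq_one_iff_eq hβ]
  · rintro ⟨ζ, ⟨m, hm, hζm⟩, hζ1, hroot⟩
    have hm1 : m ≠ 1 := by rintro rfl; exact hζ1 (pow_one ζ ▸ hζm)
    obtain ⟨hne, hpow⟩ : α ≠ β ∧ α ^ m = β ^ m := by
      rcases hroot with h | h
      · exact ne_and_pow_eq_pow_of_eq_mul hζm hζ1 hα h.symm
      · exact (ne_and_pow_eq_pow_of_eq_mul hζm hζ1 hβ h).imp Ne.symm Eq.symm
    exact ⟨m - 1, by omega, (hzero _).2 ⟨hne, by rwa [Nat.sub_add_cancel hm]⟩⟩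
end

section
/- Let K be a field of characteristic zero and let a, b, c ∈ K satisfy c² + 4ab = 0. Define the sequence (Uₙ, Vₙ) in K² by (U₀, V₀) = (0, 1) and (U_{n+1}, V_{n+1}) = (aVₙ, bUₙ + cVₙ). Then for all n ≥ 0, 2ⁿ·Vₙ = (n + 1)·cⁿ. In particular, if in addition abc ≠ 0, then Vₙ ≠ 0 for all n ≥ 0. -/
/-- Let `K` be a field of characteristic zero and `a b c : K`
with `c² + 4ab = 0`.  Define `(U₀, V₀) = (0, 1)` and
`(U_{n+1}, V_{n+1}) = (aVₙ, bUₙ + cVₙ)`.  Then `2ⁿ·Vₙ = (n + 1)·cⁿ` for all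
`n ≥ 0`; in particular if moreover `abc ≠ 0` then `Vₙ ≠ 0` for all `n ≥ 0`. -/
theorem statement7 (K : Type*) [Field K] [CharZero K] (a b c : K)
    (h : c ^ 2 + 4 * a * b = 0)
    (U V : ℕ → K) (hU0 : U 0 = 0) (hV0 : V 0 = 1)
    (hU : ∀ n : ℕ, U (n + 1) = a * V n)
    (hV : ∀ n : ℕ, V (n + 1) = b * U n + c * V n) :
    (∀ n : ℕ, (2 : K) ^ n * V n = (n + 1 : K) * c ^ n) ∧
    (a * b * c ≠ 0 → ∀ n : ℕ, V n ≠ 0) := by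
  have key : ∀ n : ℕ, (2 : K) ^ n * V n = (n + 1 : K) * c ^ n ∧
      (2 : K) ^ (n + 1) * V (n + 1) = (n + 2 : K) * c ^ (n + 1) := by
    intro n
    induction n with
    | zero =>
      constructor
      · simp [hV0]
      · rw [hV 0, hU0, hV0]; push_cast; ring
    | succ n ih =>
      refine ⟨by rw [ih.2]; push_cast; ring, ?_⟩
      have hab : a * b = -(c ^ 2) / 4 := by
        field_simp; linear_combination h
      have e : V (n + 2) = a * b * V n + c * V (n + 1) := by
        rw [hV (n + 1), hU n]; ring
      have h1 := ih.1
      have h2 := ih.2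
      rw [e, hab]
      have : (2 : K) ^ (n + 2) * (-(c ^ 2) / 4 * V n + c * V (n + 1))
          = -(c ^ 2) * ((2 : K) ^ n * V n) + 2 * c * ((2 : K) ^ (n + 1) * V (n + 1)) := by
        ring
      rw [this, h1, h2]
      push_cast
      ring
  refine ⟨fun n => (key n).1, fun habc n hn => ?_⟩
  have hc : c ≠ 0 := fun hc => habc (by rw [hc]; ring)
  have := (key n).1
  rw [hn, mul_zero] at this
  have hn1 : ((n : K) + 1) ≠ 0 := Nat.cast_add_one_ne_zero n
  exact (mul_ne_zero hn1 (pow_ne_zero n hc)) this.symm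
end

section
/- Let N ≥ 1 and let A = (a_{ij}) be an N-by-N real matrix. Define D(A) = Σ_{j=1}^N max⁺{ −a_{ij} : 1 ≤ i ≤ N } + max⁺{ Σ_{j=1}^N a_{ij} : 1 ≤ i ≤ N }, where max⁺(S) = max(0, max S), and let ‖A‖ = max{ |a_{ij}| : 1 ≤ i, j ≤ N } denote the sup-norm. Then (1/(2N))·D(A) ≤ ‖A‖ ≤ N·D(A). -/
/-- `max⁺` of a finite family of reals: `max(0, max S)`. -/
noncomputable def maxPlus {N : ℕ} (f : Fin N → ℝ) : ℝ :=
  Finset.univ.fold max 0 f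

/-- Hasselblatt–Propp degree function
`D(A) = Σ_j max⁺{−a_{ij} : i} + max⁺{Σ_j a_{ij} : i}`. -/
noncomputable def Dfun {N : ℕ} (A : Matrix (Fin N) (Fin N) ℝ) : ℝ :=
  (∑ j : Fin N, maxPlus fun i : Fin N => -A i j) +
    maxPlus fun i : Fin N => ∑ j : Fin N, A i j

/-- The sup-norm `‖A‖ = max_{i,j} |a_{ij}|` of a real matrix. -/
noncomputable def supNorm {N : ℕ} (A : Matrix (Fin N) (Fin N) ℝ) : ℝ :=
  Finset.univ.fold max 0 fun i : Fin N =>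
    Finset.univ.fold max 0 fun j : Fin N => |A i j|

lemma maxPlus_nonneg {N : ℕ} (f : Fin N → ℝ) : 0 ≤ maxPlus f :=
  (Finset.le_fold_max 0).2 (Or.inl le_rfl)

lemma le_maxPlus {N : ℕ} (f : Fin N → ℝ) (i : Fin N) : f i ≤ maxPlus f :=
  (Finset.le_fold_max (f i)).2 (Or.inr ⟨i, Finset.mem_univ i, le_rfl⟩)

lemma maxPlus_le {N : ℕ} (f : Fin N → ℝ) {c : ℝ} (hc : 0 ≤ c)
    (h : ∀ i, f i ≤ c) : maxPlus f ≤ c :=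
  (Finset.fold_max_le c).2 ⟨hc, fun i _ => h i⟩

lemma supNorm_eq {N : ℕ} (A : Matrix (Fin N) (Fin N) ℝ) :
    supNorm A = maxPlus (fun i => maxPlus fun j => |A i j|) := rfl

/-- For `N ≥ 1` and an `N×N` real matrix `A`,
`(1/(2N))·D(A) ≤ ‖A‖ ≤ N·D(A)`. -/
theorem statement10 (N : ℕ) (hN : 1 ≤ N) (A : Matrix (Fin N) (Fin N) ℝ) :
    (1 / (2 * (N : ℝ))) * Dfun A ≤ supNorm A ∧ supNorm A ≤ (N : ℝ) * Dfun A := by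
  have hNpos : (0 : ℝ) < N := by exact_mod_cast hN
  have hSnn : 0 ≤ supNorm A := maxPlus_nonneg _
  have habs : ∀ i j, |A i j| ≤ supNorm A := fun i j => by
    rw [supNorm_eq]
    exact (le_maxPlus (fun j => |A i j|) j).trans
      (le_maxPlus (fun i => maxPlus fun j => |A i j|) i)
  have hDnn : 0 ≤ Dfun A :=
    add_nonneg (Finset.sum_nonneg fun j _ => maxPlus_nonneg _) (maxPlus_nonneg _)
  constructor
  · rw [div_mul_eq_mul_div, one_mul, div_le_iff₀ (by positivity)]
    have h1 : ∀ j, maxPlus (fun i => -A i j) ≤ supNorm A := fun j =>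
      maxPlus_le _ hSnn fun i => (neg_le_abs _).trans (habs i j)
    have h2 : maxPlus (fun i : Fin N => ∑ j, A i j) ≤ N * supNorm A := by
      refine maxPlus_le _ (by positivity) fun i => ?_
      calc ∑ j, A i j ≤ ∑ j, |A i j| := Finset.sum_le_sum fun j _ => le_abs_self _
        _ ≤ ∑ _j : Fin N, supNorm A := Finset.sum_le_sum fun j _ => habs i j
        _ = N * supNorm A := by simp [mul_comm]
    calc Dfun A ≤ (∑ _j : Fin N, supNorm A) + N * supNorm A :=
          add_le_add (Finset.sum_le_sum fun j _ => h1 j) h2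
      _ = supNorm A * (2 * N) := by simp; ring
  · have key : supNorm A ≤ Dfun A := by
      refine maxPlus_le _ hDnn fun i => maxPlus_le _ hDnn fun j => ?_
      rcases le_or_gt (A i j) 0 with h | h
      · rw [abs_of_nonpos h]
        calc -A i j ≤ maxPlus (fun i => -A i j) := le_maxPlus (fun i => -A i j) i
          _ ≤ Dfun A := le_add_of_le_of_nonneg
              (Finset.single_le_sum (f := fun k => maxPlus fun i => -A i k)
                (fun k _ => maxPlus_nonneg _) (Finset.mem_univ j))
              (maxPlus_nonneg _)
      · rw [abs_of_pos h]
        have : A i j = (∑ k, A i k) + ∑ k ∈ Finset.univ.erase j, -A i k := by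
          rw [← Finset.add_sum_erase _ _ (Finset.mem_univ j)]
          simp
        rw [this, Dfun]
        rw [add_comm (∑ j : Fin N, maxPlus fun i : Fin N => -A i j)]
        refine add_le_add (le_maxPlus (fun i => ∑ j, A i j) i) ?_
        calc ∑ k ∈ Finset.univ.erase j, -A i k
            ≤ ∑ k ∈ Finset.univ.erase j, maxPlus (fun i => -A i k) :=
              Finset.sum_le_sum fun k _ => le_maxPlus (fun i => -A i k) i
          _ ≤ ∑ k, maxPlus (fun i => -A i k) :=
              Finset.sum_le_sum_of_subset_of_nonneg (Finset.subset_univ _)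
                (fun k _ _ => maxPlus_nonneg _)
    calc supNorm A ≤ Dfun A := key
      _ ≤ N * Dfun A := le_mul_of_one_le_left hDnn (by exact_mod_cast hN)
end

section
/- Let N ≥ 1 and let A be an N-by-N complex matrix. Let ‖·‖ denote the sup-norm on matrix entries and let ρ(A) = max{ |α| : α ∈ ℂ is an eigenvalue of A } be the spectral radius of A. Then there exists an integer k with 0 ≤ k ≤ N − 1 such that (2^{1/N} − 1)·‖A^{k+1}‖ ≤ ρ(A)·‖A^k‖. -/
/-- The sup-norm `‖A‖ = max_{i,j} |a_{ij}|` of a complex matrix. -/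
noncomputable def supNormC {N : ℕ} (A : Matrix (Fin N) (Fin N) ℂ) : ℝ :=
  Finset.univ.fold max 0 fun i : Fin N =>
    Finset.univ.fold max 0 fun j : Fin N => ‖A i j‖

/-- The spectral radius of a complex matrix: the maximum absolute value of its
eigenvalues, i.e. of the roots of its characteristic polynomial. -/
noncomputable def specRad {N : ℕ} (A : Matrix (Fin N) (Fin N) ℂ) : ℝ :=
  (A.charpoly.roots.map (fun z : ℂ => ‖z‖)).fold max 0

/-! Put `c = 2^{1/N} - 1` and suppose `ρ‖A^k‖ < c‖A^{k+1}‖` for every `k < N`. Chaining these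
gives `ρ^{N-i}‖A^i‖ ≤ c^{N-i}‖A^N‖`, strictly for `i = N - 1`. By Cayley–Hamilton `A^N` is a
combination of `A^0, …, A^{N-1}` whose coefficients, elementary symmetric functions of the
eigenvalues, are bounded by `C(N,i) ρ^{N-i}`. Hence `‖A^N‖ < ((1 + c)^N - 1)‖A^N‖ = ‖A^N‖`. -/

open Finset

theorem Multiset.le_fold_max {α : Type*} [LinearOrder α] {s : Multiset α} {b c : α} :
    c ≤ s.fold max b ↔ c ≤ b ∨ ∃ x ∈ s, c ≤ x := by
  induction s using Multiset.induction_on with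
  | empty => simp
  | cons a s ih =>
    simp only [Multiset.fold_cons_left, le_max_iff, ih, Multiset.mem_cons, exists_eq_or_imp]
    tauto

theorem specRad_nonneg {N : ℕ} (A : Matrix (Fin N) (Fin N) ℂ) : 0 ≤ specRad A :=
  Multiset.le_fold_max.2 (Or.inl le_rfl)

theorem norm_le_specRad {N : ℕ} {A : Matrix (Fin N) (Fin N) ℂ} {z : ℂ}
    (hz : z ∈ A.charpoly.roots) : ‖z‖ ≤ specRad A :=
  Multiset.le_fold_max.2 (Or.inr ⟨‖z‖, Multiset.mem_map_of_mem _ hz, le_rfl⟩)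

section EntrywiseNorm

attribute [local instance] Matrix.normedAddCommGroup Matrix.normedSpace

theorem supNormC_eq_norm {N : ℕ} (A : Matrix (Fin N) (Fin N) ℂ) : supNormC A = ‖A‖ := by
  refine le_antisymm ?_ ((Matrix.norm_le_iff ?_).2 fun i j => ?_)
  · exact (Finset.fold_max_le _).2 ⟨norm_nonneg A, fun i _ =>
      (Finset.fold_max_le _).2 ⟨norm_nonneg A, fun j _ =>
        Matrix.norm_entry_le_entrywise_sup_norm A⟩⟩
  · exact (Finset.le_fold_max _).2 (Or.inl le_rfl)
  · exact (Finset.le_fold_max _).2 (Or.inr ⟨i, mem_univ i,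
      (Finset.le_fold_max _).2 (Or.inr ⟨j, mem_univ j, le_rfl⟩)⟩)

theorem Matrix.norm_pow_card_le_of_roots_le {K n : Type*} [NormedField K] [IsAlgClosed K]
    [Fintype n] [DecidableEq n] (A : Matrix n n K) {r : ℝ}
    (hr : ∀ z ∈ A.charpoly.roots, ‖z‖ ≤ r) :
    ‖A ^ Fintype.card n‖ ≤
      ∑ i ∈ range (Fintype.card n),
        r ^ (Fintype.card n - i) * (Fintype.card n).choose i * ‖A ^ i‖ := by
  set p := A.charpoly
  have hdeg : p.natDegree = Fintype.card n := A.charpoly_natDegree_eq_dim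
  have hCH : A ^ Fintype.card n = -∑ i ∈ range (Fintype.card n), p.coeff i • A ^ i := by
    have h := A.aeval_self_charpoly
    rw [A.charpoly_monic.as_sum, hdeg] at h
    simpa [Polynomial.aeval_def, Polynomial.eval₂_finsetSum, Algebra.smul_def,
      eq_neg_iff_add_eq_zero] using h
  have hcoeff (i : ℕ) : ‖p.coeff i‖ ≤ r ^ (Fintype.card n - i) * (Fintype.card n).choose i := by
    simpa [hdeg] using Polynomial.coeff_le_of_roots_le (f := RingHom.id K) i A.charpoly_monic
      (by simpa using IsAlgClosed.splits p) (by simpa using hr)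
  calc ‖A ^ Fintype.card n‖ = ‖∑ i ∈ range (Fintype.card n), p.coeff i • A ^ i‖ := by
        rw [hCH, norm_neg]
    _ ≤ ∑ i ∈ range (Fintype.card n), ‖p.coeff i‖ * ‖A ^ i‖ :=
        (norm_sum_le _ _).trans_eq (by simp only [norm_smul])
    _ ≤ _ := sum_le_sum fun i _ => mul_le_mul_of_nonneg_right (hcoeff i) (norm_nonneg _)

theorem supNormC_nonneg {N : ℕ} (A : Matrix (Fin N) (Fin N) ℂ) : 0 ≤ supNormC A :=
  supNormC_eq_norm A ▸ norm_nonneg A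

theorem supNormC_pow_le_binomial_sum {N : ℕ} (A : Matrix (Fin N) (Fin N) ℂ) :
    supNormC (A ^ N) ≤ ∑ i ∈ range N, specRad A ^ (N - i) * N.choose i * supNormC (A ^ i) := by
  simpa [supNormC_eq_norm] using A.norm_pow_card_le_of_roots_le fun z hz => norm_le_specRad hz

end EntrywiseNorm

theorem pow_mul_le_pow_mul_of_forall_mul_le {m : ℕ → ℝ} {ρ c : ℝ} (hρ : 0 ≤ ρ) (hc : 0 ≤ c)
    {i j : ℕ} (hij : i ≤ j) (h : ∀ k < j, ρ * m k ≤ c * m (k + 1)) :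
    ρ ^ (j - i) * m i ≤ c ^ (j - i) * m j := by
  induction j, hij using Nat.le_induction with
  | base => simp
  | succ j hij ih =>
    rw [Nat.sub_add_comm hij, pow_succ, pow_succ]
    calc ρ ^ (j - i) * ρ * m i = ρ * (ρ ^ (j - i) * m i) := by ring
      _ ≤ ρ * (c ^ (j - i) * m j) :=
          mul_le_mul_of_nonneg_left (ih fun k hk => h k (by omega)) hρ
      _ = c ^ (j - i) * (ρ * m j) := by ring
      _ ≤ c ^ (j - i) * (c * m (j + 1)) :=
          mul_le_mul_of_nonneg_left (h j (by omega)) (pow_nonneg hc _)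
      _ = c ^ (j - i) * c * m (j + 1) := by ring

theorem sum_range_pow_sub_mul_choose (c : ℝ) (N : ℕ) :
    ∑ i ∈ range N, c ^ (N - i) * N.choose i = (1 + c) ^ N - 1 := by
  rw [add_pow, sum_range_succ]
  simp

theorem exists_mul_le_of_le_binomial_sum {m : ℕ → ℝ} {ρ c : ℝ} {N : ℕ} (hN : 1 ≤ N)
    (hmN : 0 ≤ m N) (hρ : 0 ≤ ρ) (hc : 0 ≤ c) (hc2 : (1 + c) ^ N ≤ 2)
    (hm : m N ≤ ∑ i ∈ range N, ρ ^ (N - i) * N.choose i * m i) :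
    ∃ k < N, c * m (k + 1) ≤ ρ * m k := by
  by_contra! h
  have hlast : ρ * m (N - 1) < c * m N := by
    simpa [Nat.sub_add_cancel hN] using h (N - 1) (by omega)
  have hlt : m N < ((1 + c) ^ N - 1) * m N := calc
    m N ≤ ∑ i ∈ range N, ρ ^ (N - i) * N.choose i * m i := hm
    _ < ∑ i ∈ range N, c ^ (N - i) * N.choose i * m N := by
      refine sum_lt_sum (fun i hi => ?_) ⟨N - 1, mem_range.2 (by omega), ?_⟩
      · have := pow_mul_le_pow_mul_of_forall_mul_le hρ hc (mem_range.1 hi).le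
          fun k hk => (h k hk).le
        calc ρ ^ (N - i) * N.choose i * m i = N.choose i * (ρ ^ (N - i) * m i) := by ring
          _ ≤ N.choose i * (c ^ (N - i) * m N) := by gcongr
          _ = c ^ (N - i) * N.choose i * m N := by ring
      · have hchoose : (0 : ℝ) < N.choose (N - 1) := by exact_mod_cast Nat.choose_pos (by omega)
        rw [Nat.sub_sub_self hN, pow_one, pow_one, mul_right_comm, mul_right_comm c]
        exact mul_lt_mul_of_pos_right hlast hchoose
    _ = ((1 + c) ^ N - 1) * m N := by rw [← sum_range_pow_sub_mul_choose, sum_mul]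
  nlinarith

/-- For `N ≥ 1` and an `N×N` complex matrix `A`, there is a
`k` with `0 ≤ k ≤ N − 1` such that
`(2^{1/N} − 1)·‖A^{k+1}‖ ≤ ρ(A)·‖A^k‖`. -/
theorem statement11 (N : ℕ) (hN : 1 ≤ N) (A : Matrix (Fin N) (Fin N) ℂ) :
    ∃ k : ℕ, k ≤ N - 1 ∧
      ((2 : ℝ) ^ ((1 : ℝ) / N) - 1) * supNormC (A ^ (k + 1)) ≤
        specRad A * supNormC (A ^ k) := by
  set c : ℝ := (2 : ℝ) ^ ((1 : ℝ) / N) - 1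
  have hc : 0 ≤ c := sub_nonneg.2 (Real.one_le_rpow one_le_two (by positivity))
  have hc2 : (1 + c) ^ N = 2 := by
    rw [add_sub_cancel, one_div, Real.rpow_inv_natCast_pow zero_le_two (by omega)]
  obtain ⟨k, hk, hle⟩ := exists_mul_le_of_le_binomial_sum (m := fun k => supNormC (A ^ k)) hN
    (supNormC_nonneg _) (specRad_nonneg A) hc hc2.le (supNormC_pow_le_binomial_sum A)
  exact ⟨k, by omega, hle⟩
end
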